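/- (Boundary comparison, Lemma 3.1.) Let α ∈ [0,1), R > 0, λ > 0, and let g : [0,R] → ℝ satisfy the interior radial Bol hypothesis with parameter α. Suppose 2π∫₀^R s^{1−2α} e^{g(s)} ds = ∫_{B_R(0)} |x|^{-2α} e^{U_{λ,α}(x)} dx and this common value is strictly less than 8π(1−α). Then the value of U_{λ,α} at points of norm R is at most g(R), i.e. ln( (λ(1−α))² / (1 + (λ²/8) R^{2(1−α)})² ) ≤ g(R). -/

import Mathlib

open Real MeasureTheory Metric Filter Topology RealInnerProductSpace

noncomputable section

/-- The plane `ℝ²`. -/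
abbrev Pl := EuclideanSpace ℝ (Fin 2)

/-- The Laplacian `Δu = ∂²u/∂x₁² + ∂²u/∂x₂²` of a function on `ℝ²`. -/
def lap (u : Pl → ℝ) (x : Pl) : ℝ :=
  ∑ i : Fin 2, fderiv ℝ (fun y => fderiv ℝ u y (EuclideanSpace.single i 1)) x
    (EuclideanSpace.single i 1)

/-- The radial profile of `U_{λ,α}`. -/
def Uval (lam a r : ℝ) : ℝ :=
  Real.log ((lam * (1 - a)) ^ 2 / (1 + lam ^ 2 / 8 * r ^ (2 * (1 - a))) ^ 2)

/-- `U_{λ,α}(x) = ln( (λ(1−α))² / (1 + (λ²/8)|x|^{2(1−α)})² )`. -/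
def U (lam a : ℝ) (x : Pl) : ℝ := Uval lam a ‖x‖

/-- `g` satisfies the interior radial Bol hypothesis with parameter `a` on `[0,R]`:
it is continuous and strictly decreasing on `[0,R]`, differentiable on `(0,R)`, and
`2πr·(−g'(r)) ≤ 2π∫₀^r s^{1−2a} e^{g(s)} ds` for every `r ∈ (0,R)`. -/
def InteriorBol (a R : ℝ) (g : ℝ → ℝ) : Prop :=
  ContinuousOn g (Set.Icc 0 R) ∧ StrictAntiOn g (Set.Icc 0 R) ∧
  (∀ r ∈ Set.Ioo (0:ℝ) R, DifferentiableAt ℝ g r) ∧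
  (∀ r ∈ Set.Ioo (0:ℝ) R,
    2 * π * r * (-(deriv g r)) ≤ 2 * π * ∫ s in (0:ℝ)..r, s ^ (1 - 2*a) * Real.exp (g s))

/-! Write `m(r) = ∫₀^r s^{1-2α} e^{g(s)} ds`. Since `m' = r^{1-2α} e^{g}`, the quantity
`r^{2(1-α)} e^{g(r)} - (2(1-α) m(r) - m(r)²/2)` has derivative
`r^{1-2α} e^{g(r)} (r g'(r) + m(r))`, which the Bol hypothesis makes nonnegative; as it vanishes
at `0`, it is nonnegative at `R`. For `U_{λ,α}` the same quantity vanishes identically, and the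
mass hypothesis says that `g` and `U_{λ,α}` have the same `m(R)`, so
`R^{2(1-α)} e^{U(R)} ≤ R^{2(1-α)} e^{g(R)}`. -/

open Set

lemma integral_ball_fun_norm (f : ℝ → ℝ) {R : ℝ} (hR : 0 ≤ R) :
    ∫ x in ball (0 : Pl) R, f ‖x‖ = 2 * π * ∫ r in (0:ℝ)..R, r * f r := by
  have hind :
      (ball (0 : Pl) R).indicator (fun x => f ‖x‖) = fun x => (Iio R).indicator f ‖x‖ := by
    ext x
    simp only [indicator, mem_ball_zero_iff, mem_Iio]
  have hvol : volume.real (ball (0 : Pl) 1) = π := by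
    rw [measureReal_def, EuclideanSpace.volume_ball]
    norm_num [Real.Gamma_two, Real.sq_sqrt pi_nonneg, ENNReal.toReal_ofReal pi_nonneg]
  rw [← integral_indicator measurableSet_ball, hind, integral_fun_norm_addHaar volume,
    finrank_euclideanSpace_fin, hvol]
  have hmul : (fun y => y * (Iio R).indicator f y) = (Iio R).indicator (fun y => y * f y) :=
    funext fun y => (indicator_mul_right _ (fun y => y) f).symm
  simp only [nsmul_eq_mul, smul_eq_mul, Nat.add_one_sub_one, pow_one, hmul]
  rw [setIntegral_indicator measurableSet_Iio, Ioi_inter_Iio, intervalIntegral.integral_of_le hR,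
    integral_Ioc_eq_integral_Ioo]
  push_cast
  ring

def modelMass (lam a r : ℝ) : ℝ :=
  4 * (1 - a) * (lam ^ 2 / 8 * r ^ (2 * (1 - a))) / (1 + lam ^ 2 / 8 * r ^ (2 * (1 - a)))

section Model

variable {lam a r : ℝ}

lemma exp_Uval (hlam : lam ≠ 0) (ha : a ≠ 1) (hr : 0 ≤ r) :
    exp (Uval lam a r) = (lam * (1 - a)) ^ 2 / (1 + lam ^ 2 / 8 * r ^ (2 * (1 - a))) ^ 2 := by
  have : 1 - a ≠ 0 := sub_ne_zero.mpr (Ne.symm ha)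
  rw [Uval, exp_log (by positivity)]

lemma hasDerivAt_modelMass (hlam : lam ≠ 0) (ha : a ≠ 1) (hr : 0 < r) :
    HasDerivAt (modelMass lam a) (r * (r ^ (-(2 * a)) * exp (Uval lam a r))) r := by
  have hden : 0 < 1 + lam ^ 2 / 8 * r ^ (2 * (1 - a)) := by positivity
  have hrpow := ((Real.hasDerivAt_rpow_const (p := 2 * (1 - a)) (Or.inl hr.ne')).const_mul
    (lam ^ 2 / 8))
  refine ((hrpow.const_mul (4 * (1 - a))).div (hrpow.const_add 1) hden.ne').congr_deriv ?_
  rw [exp_Uval hlam ha hr.le, show 2 * (1 - a) - 1 = 1 + -(2 * a) by ring, rpow_add hr, rpow_one]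
  field_simp
  ring

lemma integral_mul_rpow_mul_exp_Uval (hlam : lam ≠ 0) (ha : a < 1) {R : ℝ} (hR : 0 ≤ R) :
    ∫ r in (0:ℝ)..R, r * (r ^ (-(2 * a)) * exp (Uval lam a r)) = modelMass lam a R := by
  have hcont : ContinuousOn (modelMass lam a) (Icc 0 R) := by
    have hT : Continuous fun r : ℝ => lam ^ 2 / 8 * r ^ (2 * (1 - a)) :=
      continuous_const.mul (continuous_id.rpow_const fun _ => Or.inr (by linarith))
    exact (continuous_const.mul hT).continuousOn.div (continuous_const.add hT).continuousOn
      fun r hr => by have := hr.1; positivity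
  have hderiv : ∀ r ∈ Ioo 0 R,
      HasDerivAt (modelMass lam a) (r * (r ^ (-(2 * a)) * exp (Uval lam a r))) r :=
    fun r hr => hasDerivAt_modelMass hlam ha.ne hr.1
  have hnonneg : ∀ r ∈ Ioo 0 R, 0 ≤ r * (r ^ (-(2 * a)) * exp (Uval lam a r)) :=
    fun r hr => by have := hr.1; positivity
  rw [intervalIntegral.integral_eq_sub_of_hasDerivAt_of_le hR hcont hderiv
    ((intervalIntegrable_iff_integrableOn_Ioc_of_le hR).mpr
      (intervalIntegral.integrableOn_deriv_of_nonneg hcont hderiv hnonneg))]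
  simp [modelMass, zero_rpow (by linarith : 2 * (1 - a) ≠ 0)]

lemma rpow_mul_exp_Uval (hlam : lam ≠ 0) (ha : a ≠ 1) (hr : 0 ≤ r) :
    r ^ (2 * (1 - a)) * exp (Uval lam a r)
      = 2 * (1 - a) * modelMass lam a r - modelMass lam a r ^ 2 / 2 := by
  have hden : 0 < 1 + lam ^ 2 / 8 * r ^ (2 * (1 - a)) := by positivity
  rw [exp_Uval hlam ha hr, modelMass]
  field_simp
  ring

end Model

lemma integral_ball_rpow_mul_exp_U {lam a R : ℝ} (hlam : lam ≠ 0) (ha : a < 1)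
    (hR : 0 ≤ R) :
    ∫ x in ball (0 : Pl) R, ‖x‖ ^ (-(2 * a)) * exp (U lam a x)
      = 2 * π * modelMass lam a R := by
  rw [← integral_mul_rpow_mul_exp_Uval hlam ha hR]
  exact integral_ball_fun_norm (fun r => r ^ (-(2 * a)) * exp (Uval lam a r)) hR

def bolMass (a : ℝ) (g : ℝ → ℝ) (r : ℝ) : ℝ :=
  ∫ s in (0:ℝ)..r, s ^ (1 - 2 * a) * exp (g s)

def bolDefect (a : ℝ) (g : ℝ → ℝ) (r : ℝ) : ℝ :=
  r ^ (2 * (1 - a)) * exp (g r) - (2 * (1 - a) * bolMass a g r - bolMass a g r ^ 2 / 2)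

section Bol

variable {a R r : ℝ} {g : ℝ → ℝ}

lemma intervalIntegrable_rpow_mul_exp (ha : a < 1) (hgc : ContinuousOn g (Icc 0 R))
    (hr : r ∈ Icc 0 R) : IntervalIntegrable (fun s => s ^ (1 - 2 * a) * exp (g s)) volume 0 r :=
  (intervalIntegral.intervalIntegrable_rpow' (by linarith)).mul_continuousOn
    ((continuous_exp.comp_continuousOn hgc).mono
      (by rw [uIcc_of_le hr.1]; exact Icc_subset_Icc_right hr.2))

lemma continuousOn_bolMass (ha : a < 1) (hR : 0 ≤ R) (hgc : ContinuousOn g (Icc 0 R)) :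
    ContinuousOn (bolMass a g) (Icc 0 R) := by
  have := intervalIntegral.continuousOn_primitive_interval'
    (intervalIntegrable_rpow_mul_exp ha hgc ⟨hR, le_rfl⟩) left_mem_uIcc
  rwa [uIcc_of_le hR] at this

lemma hasDerivAt_bolMass (ha : a < 1) (hgc : ContinuousOn g (Icc 0 R)) (hr : r ∈ Ioo 0 R) :
    HasDerivAt (bolMass a g) (r ^ (1 - 2 * a) * exp (g r)) r := by
  have hcont : ∀ s ∈ Ioo 0 R, ContinuousAt (fun s => s ^ (1 - 2 * a) * exp (g s)) s :=
    fun s hs => (continuousAt_rpow_const s _ (Or.inl hs.1.ne')).mul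
      (continuous_exp.continuousAt.comp (hgc.continuousAt (Icc_mem_nhds hs.1 hs.2)))
  exact intervalIntegral.integral_hasDerivAt_right
    (intervalIntegrable_rpow_mul_exp ha hgc ⟨hr.1.le, hr.2.le⟩)
    (ContinuousAt.stronglyMeasurableAtFilter isOpen_Ioo hcont r hr) (hcont r hr)

lemma hasDerivAt_bolDefect (ha : a < 1) (hgc : ContinuousOn g (Icc 0 R))
    (hgd : DifferentiableAt ℝ g r) (hr : r ∈ Ioo 0 R) :
    HasDerivAt (bolDefect a g)
      (r ^ (1 - 2 * a) * exp (g r) * (r * deriv g r + bolMass a g r)) r := by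
  have hm := hasDerivAt_bolMass ha hgc hr
  have hrpow := Real.hasDerivAt_rpow_const (p := 2 * (1 - a)) (Or.inl hr.1.ne')
  refine ((hrpow.mul hgd.hasDerivAt.exp).sub
    ((hm.const_mul _).sub ((hm.pow 2).div_const 2))).congr_deriv ?_
  rw [show 2 * (1 - a) - 1 = 1 - 2 * a by ring,
    show 2 * (1 - a) = 1 + (1 - 2 * a) by ring, rpow_add hr.1, rpow_one]
  push_cast
  ring

lemma bolDefect_nonneg (ha : a < 1) (hR : 0 ≤ R) (hgc : ContinuousOn g (Icc 0 R))
    (hgd : ∀ r ∈ Ioo 0 R, DifferentiableAt ℝ g r)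
    (hbol : ∀ r ∈ Ioo 0 R, -(r * deriv g r) ≤ bolMass a g r) :
    0 ≤ bolDefect a g R := by
  have hcont : ContinuousOn (bolDefect a g) (Icc 0 R) :=
    ((((continuous_id.rpow_const fun _ => Or.inr (by linarith)).continuousOn).mul
      (continuous_exp.comp_continuousOn hgc)).sub
      ((continuousOn_const.mul (continuousOn_bolMass ha hR hgc)).sub
        (((continuousOn_bolMass ha hR hgc).pow 2).div_const 2)))
  have hmono : MonotoneOn (bolDefect a g) (Icc 0 R) := by
    refine monotoneOn_of_hasDerivWithinAt_nonneg (convex_Icc 0 R) hcont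
      (f' := fun r => r ^ (1 - 2 * a) * exp (g r) * (r * deriv g r + bolMass a g r)) ?_ ?_ <;>
      rw [interior_Icc] <;> intro r hr
    · exact (hasDerivAt_bolDefect ha hgc (hgd r hr) hr).hasDerivWithinAt
    · have hbol_r := hbol r hr
      have hr_pos := hr.1
      exact mul_nonneg (by positivity) (by linarith)
  have hzero : bolDefect a g 0 = 0 := by
    simp [bolDefect, bolMass, zero_rpow (by linarith : 2 * (1 - a) ≠ 0)]
  simpa only [hzero] using hmono ⟨le_rfl, hR⟩ ⟨hR, le_rfl⟩ hR

end Bol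

theorem boundary_comparison_general (a R lam : ℝ) (ha : a ∈ Set.Ico (0:ℝ) 1) (hR : 0 < R)
    (hlam : 0 < lam) (g : ℝ → ℝ) (hg : InteriorBol a R g)
    (hmass : 2 * π * ∫ s in (0:ℝ)..R, s ^ (1 - 2*a) * Real.exp (g s)
      = ∫ x in ball (0 : Pl) R, ‖x‖ ^ (-(2*a)) * Real.exp (U lam a x)) :
    Real.log ((lam * (1 - a)) ^ 2 / (1 + lam ^ 2 / 8 * R ^ (2*(1-a))) ^ 2) ≤ g R := by
  obtain ⟨-, ha⟩ := ha
  obtain ⟨hgc, -, hgd, hbol⟩ := hg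
  have hmodel : bolMass a g R = modelMass lam a R :=
    mul_left_cancel₀ two_pi_pos.ne' (hmass.trans (integral_ball_rpow_mul_exp_U hlam.ne' ha hR.le))
  have hdefect := bolDefect_nonneg ha hR.le hgc hgd fun r hr =>
    le_of_mul_le_mul_left (by rw [bolMass]; linear_combination hbol r hr) two_pi_pos
  rw [bolDefect, hmodel, ← rpow_mul_exp_Uval hlam.ne' ha.ne hR.le, sub_nonneg] at hdefect
  exact exp_le_exp.mp (le_of_mul_le_mul_left hdefect (rpow_pos_of_pos hR _))

/-- Boundary comparison (Lemma 3.1). -/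
theorem boundary_comparison (a R lam : ℝ) (ha : a ∈ Set.Ico (0:ℝ) 1) (hR : 0 < R)
    (hlam : 0 < lam) (g : ℝ → ℝ) (hg : InteriorBol a R g)
    (hmass : 2 * π * ∫ s in (0:ℝ)..R, s ^ (1 - 2*a) * Real.exp (g s)
      = ∫ x in ball (0 : Pl) R, ‖x‖ ^ (-(2*a)) * Real.exp (U lam a x))
    (hlt : 2 * π * ∫ s in (0:ℝ)..R, s ^ (1 - 2*a) * Real.exp (g s) < 8 * π * (1 - a)) :
    Real.log ((lam * (1 - a)) ^ 2 / (1 + lam ^ 2 / 8 * R ^ (2*(1-a))) ^ 2) ≤ g R :=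
  boundary_comparison_general a R lam ha hR hlam g hg hmass
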